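/- For integers k ≥ 1 and l, let Γ(k,l) be the group with presentation ⟨x, y, z, t | t x t⁻¹ = x, t y t⁻¹ = xᵏ y zˡ, t z t⁻¹ = z, [x,y] = z, x z = z x, y z = z y⟩. Then the abelianization of Γ(k,l) is isomorphic to ℤ² × ℤ/kℤ; in particular, its quotient by its torsion subgroup is free abelian of rank 2. -/

import Mathlib

/-- The relations of the presented group
`⟨x, y, z, t | t x t⁻¹ = x, t y t⁻¹ = xᵏ y zˡ, t z t⁻¹ = z, [x,y] = z, xz = zx, yz = zy⟩`,
where the generators `x, y, z, t` are `0, 1, 2, 3 : Fin 4`. -/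
def nilFourRels (k l : ℤ) : Set (FreeGroup (Fin 4)) :=
  let x := FreeGroup.of (0 : Fin 4)
  let y := FreeGroup.of (1 : Fin 4)
  let z := FreeGroup.of (2 : Fin 4)
  let t := FreeGroup.of (3 : Fin 4)
  {t * x * t⁻¹ * x⁻¹,
   t * y * t⁻¹ * (x ^ k * y * z ^ l)⁻¹,
   t * z * t⁻¹ * z⁻¹,
   x * y * x⁻¹ * y⁻¹ * z⁻¹,
   x * z * x⁻¹ * z⁻¹,
   y * z * y⁻¹ * z⁻¹}

namespace NilFourAux

variable (k : ℕ) (l : ℤ)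

/-- target group -/
abbrev M (k : ℕ) : Type := Multiplicative (ℤ × ℤ × ZMod k)

/-- images of the generators -/
def fgen (k : ℕ) : Fin 4 → M k :=
  ![Multiplicative.ofAdd (0, 0, 1), Multiplicative.ofAdd (1, 0, 0),
    Multiplicative.ofAdd (0, 0, 0), Multiplicative.ofAdd (0, 1, 0)]

theorem rels_hold : ∀ r ∈ nilFourRels (k : ℤ) l, FreeGroup.lift (fgen k) r = 1 := by
  intro r hr
  simp only [nilFourRels, Set.mem_insert_iff, Set.mem_singleton_iff] at hr
  rcases hr with h | h | h | h | h | h <;> subst h <;>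
    simp only [map_mul, map_inv, map_zpow, FreeGroup.lift_apply_of, fgen,
      Matrix.cons_val_zero, Matrix.cons_val_one, Matrix.head_cons] <;>
    · apply Multiplicative.toAdd.injective
      simp [Prod.ext_iff]
      try ring_nf
      try simp

/-- abbreviation for the presented group -/
abbrev Γ (k : ℕ) (l : ℤ) : Type := PresentedGroup (nilFourRels (k : ℤ) l)

abbrev A (k : ℕ) (l : ℤ) : Type := Abelianization (Γ k l)

/-- image of generators in the abelianization -/
def a (k : ℕ) (l : ℤ) (i : Fin 4) : A k l :=
  Abelianization.of (PresentedGroup.of i)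

/-- the composite `FreeGroup (Fin 4) →* A k l` -/
def am (k : ℕ) (l : ℤ) : FreeGroup (Fin 4) →* A k l :=
  (Abelianization.of (G := Γ k l)).comp (PresentedGroup.mk _)

theorem am_of (i : Fin 4) : am k l (FreeGroup.of i) = a k l i := rfl

theorem am_rel : ∀ r ∈ nilFourRels (k : ℤ) l, am k l r = 1 := by
  intro r hr
  have : PresentedGroup.mk (nilFourRels (k : ℤ) l) r = 1 :=
    (QuotientGroup.eq_one_iff r).2 (Subgroup.subset_normalClosure hr)
  simp [am, this]

theorem a2_eq_one : a k l 2 = 1 := by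
  have h := am_rel k l (FreeGroup.of 0 * FreeGroup.of 1 * (FreeGroup.of 0)⁻¹ *
      (FreeGroup.of 1)⁻¹ * (FreeGroup.of 2)⁻¹) (by simp [nilFourRels])
  simp only [map_mul, map_inv, am_of] at h
  have := mul_comm (a k l 0) (a k l 1)
  -- cancel in the commutative group
  rw [show a k l 0 * a k l 1 * (a k l 0)⁻¹ * (a k l 1)⁻¹ = 1 by
    rw [mul_comm (a k l 0) (a k l 1)]; group] at h
  simpa using inv_eq_one.mp (by simpa using h)

theorem a0_pow_k : a k l 0 ^ (k : ℤ) = 1 := by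
  have h := am_rel k l (FreeGroup.of 3 * FreeGroup.of 1 * (FreeGroup.of 3)⁻¹ *
      (FreeGroup.of 0 ^ (k : ℤ) * FreeGroup.of 1 * FreeGroup.of 2 ^ l)⁻¹)
      (by simp [nilFourRels])
  simp only [map_mul, map_inv, map_zpow, am_of, a2_eq_one, one_zpow, mul_one] at h
  rw [show a k l 3 * a k l 1 * (a k l 3)⁻¹ = a k l 1 by
    rw [mul_comm (a k l 3) (a k l 1)]; group] at h
  rw [mul_inv, ← mul_assoc] at h
  simpa [mul_comm] using h

/-- `Φ : A k l →* M k` -/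
def Phi : A k l →* M k :=
  Abelianization.lift (PresentedGroup.toGroup (rels_hold k l))

theorem Phi_a (i : Fin 4) : Phi k l (a k l i) = fgen k i := by
  simp [Phi, a, PresentedGroup.toGroup.of]

theorem k_smul_X : (k : ℤ) • Additive.ofMul (a k l 0) = 0 := by
  rw [← ofMul_zpow, a0_pow_k]; rfl

/-- `ψ : ℤ × ℤ × ZMod k →+ Additive (A k l)` -/
def psiAdd : ℤ × ℤ × ZMod k →+ Additive (A k l) :=
  (zmultiplesHom _ (Additive.ofMul (a k l 1))).coprod
    ((zmultiplesHom _ (Additive.ofMul (a k l 3))).coprod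
      (ZMod.lift k ⟨zmultiplesHom _ (Additive.ofMul (a k l 0)), k_smul_X k l⟩))

def Psi : M k →* A k l := AddMonoidHom.toMultiplicativeLeft (psiAdd k l)

theorem Psi_apply (p q : ℤ) (n : ℤ) :
    Psi k l (Multiplicative.ofAdd (p, q, (n : ZMod k))) =
      a k l 1 ^ p * (a k l 3 ^ q * a k l 0 ^ n) := by
  simp [Psi, psiAdd, AddMonoidHom.coe_toMultiplicativeLeft, AddMonoidHom.coprod_apply,
    ZMod.lift_coe]

theorem left_inv : (Psi k l).comp (Phi k l) = MonoidHom.id (A k l) := by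
  apply Abelianization.hom_ext
  apply PresentedGroup.ext
  intro i
  show Psi k l (Phi k l (a k l i)) = a k l i
  rw [Phi_a]
  fin_cases i
  · show Psi k l (fgen k 0) = a k l 0
    have : (fgen k 0) = Multiplicative.ofAdd ((0 : ℤ), (0 : ℤ), ((1 : ℤ) : ZMod k)) := by
      simp [fgen]
    rw [this, Psi_apply]; simp
  · show Psi k l (fgen k 1) = a k l 1
    have : (fgen k 1) = Multiplicative.ofAdd ((1 : ℤ), (0 : ℤ), ((0 : ℤ) : ZMod k)) := by
      simp [fgen]
    rw [this, Psi_apply]; simp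
  · show Psi k l (fgen k 2) = a k l 2
    have : (fgen k 2) = Multiplicative.ofAdd ((0 : ℤ), (0 : ℤ), ((0 : ℤ) : ZMod k)) := by
      simp [fgen]
    rw [this, Psi_apply]; simp [a2_eq_one]
  · show Psi k l (fgen k 3) = a k l 3
    have : (fgen k 3) = Multiplicative.ofAdd ((0 : ℤ), (1 : ℤ), ((0 : ℤ) : ZMod k)) := by
      simp [fgen]
    rw [this, Psi_apply]; simp

theorem right_inv : (Phi k l).comp (Psi k l) = MonoidHom.id (M k) := by
  refine MonoidHom.ext fun m => ?_
  obtain ⟨⟨p, q, c⟩, rfl⟩ : ∃ x, Multiplicative.ofAdd x = m := ⟨m.toAdd, rfl⟩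
  obtain ⟨n, rfl⟩ := ZMod.intCast_surjective c
  simp only [MonoidHom.comp_apply, MonoidHom.id_apply, Psi_apply, map_mul, map_zpow, Phi_a]
  apply Multiplicative.toAdd.injective
  simp [fgen, Prod.ext_iff]

/-- the first isomorphism -/
noncomputable def equivM : A k l ≃* M k :=
  MonoidHom.toMulEquiv (Phi k l) (Psi k l) (left_inv k l) (right_inv k l)

/-- projection to the free part -/
def proj (k : ℕ) : M k →* Multiplicative (ℤ × ℤ) :=
  AddMonoidHom.toMultiplicative
    ((AddMonoidHom.fst ℤ (ℤ × ZMod k)).prod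
      ((AddMonoidHom.fst ℤ (ZMod k)).comp (AddMonoidHom.snd ℤ (ℤ × ZMod k))))

theorem proj_apply (p q : ℤ) (c : ZMod k) :
    proj k (Multiplicative.ofAdd (p, q, c)) = Multiplicative.ofAdd (p, q) := rfl

theorem proj_surjective : Function.Surjective (proj k) := by
  intro m
  exact ⟨Multiplicative.ofAdd (m.toAdd.1, m.toAdd.2, 0), rfl⟩

theorem finOrder_iff (hk : 1 ≤ k) (x : M k) :
    IsOfFinOrder x ↔ x.toAdd.1 = 0 ∧ x.toAdd.2.1 = 0 := by
  obtain ⟨⟨p, q, c⟩, rfl⟩ : ∃ y, Multiplicative.ofAdd y = x := ⟨x.toAdd, rfl⟩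
  simp only [toAdd_ofAdd]
  rw [isOfFinOrder_iff_pow_eq_one]
  constructor
  · rintro ⟨n, hn, h⟩
    have h' := congrArg Multiplicative.toAdd h
    simp only [toAdd_pow, toAdd_ofAdd, toAdd_one, Prod.smul_mk, Prod.mk_eq_zero,
      nsmul_eq_mul] at h'
    have hn' : (n : ℤ) ≠ 0 := by exact_mod_cast hn.ne'
    exact ⟨(mul_eq_zero.mp h'.1).resolve_left hn', (mul_eq_zero.mp h'.2.1).resolve_left hn'⟩
  · rintro ⟨h1, h2⟩
    refine ⟨k, hk, ?_⟩
    apply Multiplicative.toAdd.injective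
    simp [Prod.ext_iff, h1, h2, nsmul_eq_mul]

theorem proj_eq_one_iff (x : M k) :
    proj k x = 1 ↔ x.toAdd.1 = 0 ∧ x.toAdd.2.1 = 0 := by
  rw [show proj k x = Multiplicative.ofAdd (x.toAdd.1, x.toAdd.2.1) from rfl]
  constructor
  · intro h
    have := congrArg Multiplicative.toAdd h
    simpa [Prod.ext_iff] using this
  · rintro ⟨h1, h2⟩
    apply Multiplicative.toAdd.injective
    simp [Prod.ext_iff, h1, h2]
/-- the full-rank quotient map -/
noncomputable def qmap : A k l →* Multiplicative (ℤ × ℤ) :=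
  (proj k).comp (equivM k l).toMonoidHom

theorem qmap_surjective : Function.Surjective (qmap k l) :=
  (proj_surjective k).comp (equivM k l).surjective

theorem ker_qmap (hk : 1 ≤ k) : (qmap k l).ker = CommGroup.torsion (A k l) := by
  ext g
  rw [MonoidHom.mem_ker, CommGroup.mem_torsion,
    ← Function.Injective.isOfFinOrder_iff (f := (equivM k l).toMonoidHom)
      (equivM k l).injective,
    finOrder_iff k hk]
  exact proj_eq_one_iff k _

/-- the second isomorphism -/
noncomputable def torsionQuotEquiv (hk : 1 ≤ k) :
    (A k l ⧸ CommGroup.torsion (A k l)) ≃* Multiplicative (ℤ × ℤ) :=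
  (QuotientGroup.quotientMulEquivOfEq (ker_qmap k l hk).symm).trans
    (QuotientGroup.quotientKerEquivOfSurjective _ (qmap_surjective k l))

end NilFourAux

/-- For integers `k ≥ 1` and `l`, the abelianization of the group
`Γ(k,l) = ⟨x, y, z, t | t x t⁻¹ = x, t y t⁻¹ = xᵏ y zˡ, t z t⁻¹ = z, [x,y] = z,
x z = z x, y z = z y⟩` is isomorphic to `ℤ² × ℤ/kℤ`; in particular, its quotient by its
torsion subgroup is free abelian of rank `2`. -/
theorem abelianization_nilFourGroup (k : ℕ) (l : ℤ) (hk : 1 ≤ k) :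
    Nonempty (Abelianization (PresentedGroup (nilFourRels (k : ℤ) l)) ≃*
        Multiplicative (ℤ × ℤ × ZMod k)) ∧
    Nonempty
      ((Abelianization (PresentedGroup (nilFourRels (k : ℤ) l)) ⧸
          CommGroup.torsion (Abelianization (PresentedGroup (nilFourRels (k : ℤ) l)))) ≃*
        Multiplicative (ℤ × ℤ)) := by
  exact ⟨⟨NilFourAux.equivM k l⟩, ⟨NilFourAux.torsionQuotEquiv k l hk⟩⟩
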